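/- arXiv:2010.14555 — 2 statements merged into one kernel-verified Lean document; each statement's English description precedes it below -/
import Mathlib

section
/- Under the setup of the previous statement, define τ_i = Y_i(1) − Y_i(0), ξ_i = b_i(1) − b_i(0), S_τ² = (1/(N−1)) Σ_i (τ_i − τ̄)² with τ̄ the mean of τ_i, and S_ξ² = (1/(N−1)) Σ_i (ξ_i − ξ̄)² with ξ̄ = 0. Then S_ξ² = S_τ² − ‖γ₁ − γ₀‖², and in particular S_ξ² ≤ S_τ². -/
/-!
Write `δ = γ₁ - γ₀` and `t_i = τ_i - τ̄`. Then `ξ_i = t_i - x_iᵀδ` is the residual of the OLS fit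
of the centered `τ` on `x`, and `δ` is exactly that fit's slope, since `Σ_i t_i x_i = (N-1) δ`.
Because `S_x² = I`, the fitted values `x_iᵀδ` have sum of squares `(N-1)‖δ‖²` and are orthogonal to
the residuals, so Pythagoras gives `Σ ξ_i² = Σ t_i² - (N-1)‖δ‖²`.
-/

open Matrix

section LeastSquares

variable {ι n R : Type*} [Fintype ι] [Fintype n] [CommRing R]

lemma sum_dotProduct_sq (x : ι → n → R) (v : n → R) :
    ∑ i, (x i ⬝ᵥ v) ^ 2 = v ⬝ᵥ ((∑ i, vecMulVec (x i) (x i)) *ᵥ v) := by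
  simp only [sum_mulVec, vecMulVec_mulVec, op_smul_eq_smul, dotProduct_sum, dotProduct_smul,
    smul_eq_mul, sq, dotProduct_comm v (x _)]

lemma sum_sq_residual_eq [DecidableEq n] {c : R} (x : ι → n → R) (t : ι → R) (δ : n → R)
    (hcov : ∑ i, vecMulVec (x i) (x i) = c • 1) (hslope : ∑ i, t i • x i = c • δ) :
    ∑ i, (t i - x i ⬝ᵥ δ) ^ 2 = ∑ i, t i ^ 2 - c * (δ ⬝ᵥ δ) := by
  have hcross : ∑ i, t i * (x i ⬝ᵥ δ) = c * (δ ⬝ᵥ δ) := by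
    simp only [← smul_eq_mul, ← smul_dotProduct, ← sum_dotProduct, hslope]
  have hfit : ∑ i, (x i ⬝ᵥ δ) ^ 2 = c * (δ ⬝ᵥ δ) := by
    rw [sum_dotProduct_sq, hcov, smul_mulVec, one_mulVec, dotProduct_smul, smul_eq_mul]
  simp only [sub_sq, Finset.sum_add_distrib, Finset.sum_sub_distrib, mul_assoc, ← Finset.mul_sum,
    hcross, hfit]
  ring

end LeastSquares

lemma sum_sub_smul_of_sum_eq_zero {ι R M : Type*} [Fintype ι] [Ring R] [AddCommGroup M]
    [Module R M] {x : ι → M} (hx : ∑ i, x i = 0) (f : ι → R) (m : R) :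
    ∑ i, (f i - m) • x i = ∑ i, f i • x i := by
  simp only [sub_smul, Finset.sum_sub_distrib, ← Finset.smul_sum, hx, smul_zero, sub_zero]

lemma sum_sub_mean_eq_zero {K : Type*} [Field K] {N : ℕ} (hN : (N : K) ≠ 0) (f : Fin N → K) :
    ∑ i, (f i - (N : K)⁻¹ * ∑ j, f j) = 0 := by
  rw [Finset.sum_sub_distrib, Finset.sum_const, Finset.card_fin, nsmul_eq_mul,
    mul_inv_cancel_left₀ hN, sub_self]

theorem stmt4 (N J : ℕ) (hN : 2 ≤ N)
    (Y : Fin 2 → Fin N → ℝ) (x : Fin N → Fin J → ℝ)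
    (hxc : ∑ i, x i = 0)
    (hxs : ((N : ℝ) - 1)⁻¹ • ∑ i, vecMulVec (x i) (x i) = (1 : Matrix (Fin J) (Fin J) ℝ))
    (γ : Fin 2 → Fin J → ℝ)
    (hγ : ∀ z, γ z = ((N : ℝ) - 1)⁻¹ • ∑ i, Y z i • x i)
    (Ybar : Fin 2 → ℝ) (hYbar : ∀ z, Ybar z = (N : ℝ)⁻¹ * ∑ i, Y z i)
    (b : Fin 2 → Fin N → ℝ)
    (hb : ∀ z i, b z i = Y z i - Ybar z - x i ⬝ᵥ γ z)
    (τ ξ : Fin N → ℝ)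
    (hτ : ∀ i, τ i = Y 1 i - Y 0 i) (hξ : ∀ i, ξ i = b 1 i - b 0 i)
    (τbar ξbar Sτ Sξ : ℝ)
    (hτbar : τbar = (N : ℝ)⁻¹ * ∑ i, τ i)
    (hξbar : ξbar = (N : ℝ)⁻¹ * ∑ i, ξ i)
    (hSτ : Sτ = ((N : ℝ) - 1)⁻¹ * ∑ i, (τ i - τbar) ^ 2)
    (hSξ : Sξ = ((N : ℝ) - 1)⁻¹ * ∑ i, (ξ i - ξbar) ^ 2) :
    ξbar = 0 ∧ Sξ = Sτ - (γ 1 - γ 0) ⬝ᵥ (γ 1 - γ 0) ∧ Sξ ≤ Sτ := by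
  have hN0 : (N : ℝ) ≠ 0 := by positivity
  have hN1 : (N : ℝ) - 1 ≠ 0 := by
    have : (2 : ℝ) ≤ N := by exact_mod_cast hN
    linarith
  have hτbar' : τbar = Ybar 1 - Ybar 0 := by
    simp only [hτbar, hYbar, hτ, Finset.sum_sub_distrib]
    ring
  have hξτ : ∀ i, ξ i = (τ i - τbar) - x i ⬝ᵥ (γ 1 - γ 0) := fun i => by
    rw [hξ, hb, hb, hτ, hτbar', dotProduct_sub]
    ring
  have hcov : ∑ i, vecMulVec (x i) (x i) = ((N : ℝ) - 1) • 1 := (inv_smul_eq_iff₀ hN1).mp hxs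
  have hslope : ∑ i, (τ i - τbar) • x i = ((N : ℝ) - 1) • (γ 1 - γ 0) := by
    rw [sum_sub_smul_of_sum_eq_zero hxc]
    simp only [hτ, sub_smul, Finset.sum_sub_distrib, smul_sub,
      fun z => (inv_smul_eq_iff₀ hN1).mp (hγ z).symm]
  have hξbar0 : ξbar = 0 := by
    simp only [hξbar, hξτ, Finset.sum_sub_distrib, ← sum_dotProduct, hxc, zero_dotProduct, hτbar,
      sum_sub_mean_eq_zero hN0, sub_zero, mul_zero]
  have hSξτ : Sξ = Sτ - (γ 1 - γ 0) ⬝ᵥ (γ 1 - γ 0) := by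
    simp only [hSξ, hSτ, hξbar0, sub_zero, hξτ]
    rw [sum_sq_residual_eq x (fun i => τ i - τbar) _ hcov hslope]
    field_simp
  refine ⟨hξbar0, hSξτ, hSξτ ▸ sub_le_self _ ?_⟩
  simpa using dotProduct_self_star_nonneg (γ 1 - γ 0)
end

section
/- Let u, v ∈ ℝ^N with means ū = (1/N)Σu_i, v̄ = (1/N)Σv_i and finite-population variances S_u² = (1/(N−1))Σ(u_i − ū)², S_v² = (1/(N−1))Σ(v_i − v̄)². Let π be a uniformly random permutation of {1,…,N}. Then E[(1/N) Σ_i u_i v_{π(i)}] = ū v̄ and Var[(1/N) Σ_i u_i v_{π(i)}] = (N−1)/N² · S_u² S_v². -/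
/-!
Right multiplication by a transposition preserves the uniform average over permutations, so
`π i` is uniformly distributed, and for `i ≠ k` the law of `(π i, π k)` does not depend on
`k ≠ i`. For a vector `b` summing to zero this gives `E[b (π i) b (π k)] = Σ b² / N` on the
diagonal and `-Σ b² / (N (N - 1))` off it. After centring `u` and `v`, the variance of the
statistic is the quadratic form of `u - ū` against this covariance matrix.
-/

open Equiv Finset
open scoped BigOperators

theorem card_sub_one_ne_zero {ι K : Type*} [Fintype ι] [Nontrivial ι] [Field K] [CharZero K] :
    (Fintype.card ι : K) - 1 ≠ 0 := by
  rw [sub_ne_zero, Nat.cast_ne_one]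
  exact Fintype.one_lt_card.ne'

theorem sum_sub_inv_card_mul_sum {ι K : Type*} [Fintype ι] [Field K] [CharZero K] (w : ι → K) :
    ∑ i, (w i - (Fintype.card ι : K)⁻¹ * ∑ j, w j) = 0 := by
  rcases isEmpty_or_nonempty ι with _ | _
  · simp
  · simp only [sum_sub_distrib, sum_const, card_univ, nsmul_eq_mul]
    field_simp
    ring

section PermutationMoments

variable {α K : Type*} [Fintype α] [DecidableEq α]

theorem expect_perm_apply {M : Type*} [AddCommMonoid M] [Module ℚ≥0 M] (f : α → M) (i : α) :
    𝔼 π : Perm α, f (π i) = 𝔼 j, f j := by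
  have : Nonempty α := ⟨i⟩
  have hconst : ∀ j, 𝔼 π : Perm α, f (π j) = 𝔼 π : Perm α, f (π i) := fun j =>
    Fintype.expect_equiv (Equiv.mulRight (swap i j)) _ _ fun π => by simp
  calc 𝔼 π : Perm α, f (π i) = 𝔼 j, 𝔼 π : Perm α, f (π j) := by
        simp only [hconst, Fintype.expect_const]
    _ = 𝔼 π : Perm α, 𝔼 j, f (π j) := expect_comm ..
    _ = 𝔼 j, f j := by
        simp only [fun π : Perm α => Fintype.expect_equiv π (fun j => f (π j)) f fun _ => rfl,
          Fintype.expect_const]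

variable [Field K] [CharZero K]

theorem expect_perm_sum_mul_apply (a b : α → K) :
    𝔼 π : Perm α, ∑ i, a i * b (π i) = (∑ i, a i) * (∑ j, b j) / Fintype.card α := by
  simp only [expect_sum_comm, ← mul_expect, expect_perm_apply b, Fintype.expect_eq_sum_div_card,
    ← sum_mul, mul_div_assoc]

theorem expect_perm_apply_mul_apply_of_ne (f g : α → K) (hg : ∑ j, g j = 0) {i k : α}
    (hik : i ≠ k) :
    𝔼 π : Perm α, f (π i) * g (π k) = -(𝔼 j, f j * g j) / (Fintype.card α - 1) := by
  have : Nontrivial α := ⟨⟨i, k, hik⟩⟩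
  set S := fun l => 𝔼 π : Perm α, f (π i) * g (π l)
  have hconst : ∀ l ∈ univ.erase i, S l = S k := fun l hl =>
    Fintype.expect_equiv (Equiv.mulRight (swap k l)) _ _ fun π => by
      simp [swap_apply_of_ne_of_ne hik (ne_of_mem_erase hl).symm]
  have hrow : ∀ π : Perm α, ∑ l ∈ univ.erase i, g (π l) = -g (π i) := fun π => by
    have htotal := add_sum_erase univ (fun l => g (π l)) (mem_univ i)
    rw [Equiv.sum_comp π g, hg] at htotal
    linear_combination htotal
  have hsum : ∑ l ∈ univ.erase i, S l = -(𝔼 j, f j * g j) := by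
    simp only [S, ← expect_sum_comm, ← mul_sum, hrow, mul_neg, expect_neg_distrib,
      expect_perm_apply (fun j => f j * g j)]
  rw [sum_congr rfl hconst, sum_const, card_erase_of_mem (mem_univ i), card_univ, nsmul_eq_mul,
    Nat.cast_pred Fintype.card_pos] at hsum
  have hcard : (Fintype.card α : K) - 1 ≠ 0 := card_sub_one_ne_zero
  change S k = _
  rw [← hsum]
  field_simp

theorem sum_mul_expect_perm_apply_mul_apply [Nontrivial α] (a b : α → K) (ha : ∑ i, a i = 0)
    (hb : ∑ j, b j = 0) (i : α) :
    ∑ k, a k * 𝔼 π : Perm α, b (π i) * b (π k)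
      = a i * (∑ j, b j ^ 2) / (Fintype.card α - 1) := by
  have hoff : ∑ k ∈ univ.erase i, a k = -a i := by
    have htotal := add_sum_erase univ a (mem_univ i)
    rw [ha] at htotal
    linear_combination htotal
  rw [← add_sum_erase _ _ (mem_univ i),
    sum_congr rfl fun k hk => by
      rw [expect_perm_apply_mul_apply_of_ne b b hb (ne_of_mem_erase hk).symm],
    ← sum_mul, hoff, expect_perm_apply (fun j => b j * b j), Fintype.expect_eq_sum_div_card]
  have hcard : (Fintype.card α : K) - 1 ≠ 0 := card_sub_one_ne_zero
  simp only [← sq]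
  field_simp
  ring

theorem expect_perm_sum_mul_apply_sq [Nontrivial α] (a b : α → K) (ha : ∑ i, a i = 0)
    (hb : ∑ j, b j = 0) :
    𝔼 π : Perm α, (∑ i, a i * b (π i)) ^ 2
      = (∑ i, a i ^ 2) * (∑ j, b j ^ 2) / (Fintype.card α - 1) := by
  have hexpand : ∀ π : Perm α, (∑ i, a i * b (π i)) ^ 2
      = ∑ i, a i * ∑ k, a k * (b (π i) * b (π k)) := fun π => by
    rw [sq, sum_mul_sum]
    simp only [mul_sum]
    exact sum_congr rfl fun i _ => sum_congr rfl fun k _ => by ring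
  simp only [hexpand, expect_sum_comm, ← mul_expect,
    sum_mul_expect_perm_apply_mul_apply a b ha hb, sum_div, sum_mul]
  exact sum_congr rfl fun i _ => by ring

end PermutationMoments

theorem stmt5 (N : ℕ) (hN : 2 ≤ N) (u v : Fin N → ℝ)
    (ubar vbar Su Sv ET VarT : ℝ)
    (hubar : ubar = (N : ℝ)⁻¹ * ∑ i, u i) (hvbar : vbar = (N : ℝ)⁻¹ * ∑ i, v i)
    (hSu : Su = ((N : ℝ) - 1)⁻¹ * ∑ i, (u i - ubar) ^ 2)
    (hSv : Sv = ((N : ℝ) - 1)⁻¹ * ∑ i, (v i - vbar) ^ 2)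
    (T : Equiv.Perm (Fin N) → ℝ)
    (hT : ∀ π, T π = (N : ℝ)⁻¹ * ∑ i, u i * v (π i))
    (hE : ET = (Fintype.card (Equiv.Perm (Fin N)) : ℝ)⁻¹ * ∑ π : Equiv.Perm (Fin N), T π)
    (hV : VarT = (Fintype.card (Equiv.Perm (Fin N)) : ℝ)⁻¹
            * ∑ π : Equiv.Perm (Fin N), (T π - ET) ^ 2) :
    ET = ubar * vbar ∧ VarT = (((N : ℝ) - 1) / (N : ℝ) ^ 2) * (Su * Sv) := by
  have : Nontrivial (Fin N) := Fin.nontrivial_iff_two_le.2 hN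
  have hN0 : (N : ℝ) ≠ 0 := by positivity
  have hN1 : (N : ℝ) - 1 ≠ 0 := by simpa using card_sub_one_ne_zero (ι := Fin N) (K := ℝ)
  simp only [inv_mul_eq_div, ← Fintype.expect_eq_sum_div_card] at hE hV
  have hET : ET = ubar * vbar := by
    rw [hE, hubar, hvbar]
    simp only [hT, ← mul_expect, expect_perm_sum_mul_apply, Fintype.card_fin]
    ring
  have hcentered : ∀ π : Perm (Fin N),
      T π - ET = (N : ℝ)⁻¹ * ∑ i, (u i - ubar) * (v (π i) - vbar) := fun π => by
    simp only [hT, hET, sub_mul, mul_sub, sum_sub_distrib, ← mul_sum, ← sum_mul, sum_const,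
      Equiv.sum_comp π v, card_univ, Fintype.card_fin, nsmul_eq_mul, hubar, hvbar]
    field_simp
    ring
  refine ⟨hET, ?_⟩
  rw [hV]
  simp only [hcentered, mul_pow, ← mul_expect]
  rw [expect_perm_sum_mul_apply_sq (fun i => u i - ubar) (fun j => v j - vbar)
    (by simpa [hubar] using sum_sub_inv_card_mul_sum u)
    (by simpa [hvbar] using sum_sub_inv_card_mul_sum v), hSu, hSv, Fintype.card_fin]
  field_simp
end
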